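/- arXiv:2603.05985 — 7 statements merged into one kernel-verified Lean document; each statement's English description precedes it below -/
import Mathlib

section
/- Let E/F be a quadratic extension, τ ∈ E× with tr_{E/F}(τ) = 0, and V a nondegenerate quadratic space over E with form q. Let 𝐕_τ = Res_{E/F}(V) with form 𝐪 = tr_{E/F}(τ q). For an F-Lagrangian subspace L ⊆ 𝐕_τ, define L_an = {x ∈ L : q(x,y) = 0 for all y ∈ L}. Then L_an = L ∩ τL; in particular L_an is an E-subspace of V. -/
/-!
Since `tr(τ q)` is nondegenerate, the Lagrangian `L` is its own orthogonal. If `q(x, L) = 0` then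
`tr(τ q(τ⁻¹x, L)) = tr(q(x, L)) = 0`, so `τ⁻¹x ∈ L`. Conversely, if `x = τz` with `x, z ∈ L`,
each `c = q(z, y)`, `y ∈ L`, has `tr(τc) = tr(τ²c) = 0`; as `1, τ` span `E` over `F`, `τc` is
then orthogonal to all of `E` under the trace form, which forces `c = 0`.
-/

open Module

section QuadraticExtension

variable {F E : Type*} [Field F] [Field E] [Algebra F E]

theorem trace_algebraMap_of_finrank_eq_two (h : finrank F E = 2) (a : F) :
    Algebra.trace F E (algebraMap F E a) = 2 * a := by
  rw [Algebra.trace_algebraMap, h, nsmul_eq_mul, Nat.cast_ofNat]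

theorem span_pair_one_eq_top_of_trace_eq_zero [CharZero F] (h : finrank F E = 2) {τ : E}
    (hτ : τ ≠ 0) (htr : Algebra.trace F E τ = 0) : Submodule.span F {1, τ} = ⊤ := by
  have : FiniteDimensional F E := Module.finite_of_finrank_eq_succ h
  have hτF : ∀ a : F, a • (1 : E) ≠ τ := by
    rintro a rfl
    rw [← Algebra.algebraMap_eq_smul_one, trace_algebraMap_of_finrank_eq_two h] at htr
    simp_all
  have hli := (LinearIndependent.pair_iff' one_ne_zero).mpr hτF
  simpa [Set.pair_comm] using hli.span_eq_top_of_card_eq_finrank' (by simp [h])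

theorem eq_zero_of_trace_mul_eq_zero_of_trace_mul_mul_eq_zero [CharZero F]
    (h : finrank F E = 2) {τ : E} (hτ : τ ≠ 0) (htr : Algebra.trace F E τ = 0) {c : E}
    (h₁ : Algebra.trace F E (τ * c) = 0) (h₂ : Algebra.trace F E (τ * (τ * c)) = 0) :
    c = 0 := by
  by_contra hc
  have hall : ∀ e : E, Algebra.trace F E (τ * c * e) = 0 := by
    intro e
    obtain ⟨a, b, rfl⟩ := Submodule.mem_span_pair.mp
      (span_pair_one_eq_top_of_trace_eq_zero h hτ htr ▸ Submodule.mem_top (x := e))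
    rw [mul_add, mul_smul_comm, mul_smul_comm, mul_one, map_add, map_smul, map_smul, h₁,
      mul_comm (τ * c) τ, h₂, smul_zero, smul_zero, add_zero]
  have := hall (τ * c)⁻¹
  rw [mul_inv_cancel₀ (mul_ne_zero hτ hc), ← map_one (algebraMap F E),
    trace_algebraMap_of_finrank_eq_two h] at this
  simp at this

end QuadraticExtension

namespace LinearMap.BilinForm

theorem orthogonal_eq_self_of_le_orthogonal {K W : Type*} [Field K] [AddCommGroup W]
    [Module K W] [FiniteDimensional K W] {B : LinearMap.BilinForm K W} (hB : B.Nondegenerate)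
    {L : Submodule K W} (hL : L ≤ B.orthogonal L) (hdim : 2 * finrank K L = finrank K W) :
    B.orthogonal L = L :=
  (Submodule.eq_of_le_of_finrank_le hL (by rw [finrank_orthogonal hB]; omega)).symm

variable (F : Type*) {E V : Type*} [Field F] [Field E] [Algebra F E]
  [AddCommGroup V] [Module E V] [Module F V] [IsScalarTower F E V]

/-- The form `𝐪 = tr_{E/F}(τ q)` of `𝐕_τ`. -/
noncomputable def twistedTraceForm (τ : E) (q : LinearMap.BilinForm E V) :
    LinearMap.BilinForm F V :=
  (restrictScalars₁₂ F F q).compr₂ ((Algebra.trace F E).comp (LinearMap.mul F E τ))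

variable {F}

@[simp]
theorem twistedTraceForm_apply (τ : E) (q : LinearMap.BilinForm E V) (x y : V) :
    twistedTraceForm F τ q x y = Algebra.trace F E (τ * q x y) :=
  rfl

theorem isSymm_twistedTraceForm {q : LinearMap.BilinForm E V} (hq : q.IsSymm) (τ : E) :
    (twistedTraceForm F τ q).IsSymm :=
  ⟨fun x y => by rw [twistedTraceForm_apply, twistedTraceForm_apply, hq.eq x y]⟩

theorem separatingLeft_twistedTraceForm {q : LinearMap.BilinForm E V} (hq : q.SeparatingLeft)
    {τ : E} (hτ : τ ≠ 0) (htr : Algebra.trace F E 1 ≠ 0) :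
    (twistedTraceForm F τ q).SeparatingLeft := by
  intro x hx
  refine hq x fun y => by_contra fun hxy => htr ?_
  simpa [mul_inv_cancel₀, hτ, hxy, mul_comm τ, mul_assoc] using
    hx ((τ⁻¹ * (q x y)⁻¹) • y)

theorem nondegenerate_twistedTraceForm {q : LinearMap.BilinForm E V} (hsymm : q.IsSymm)
    (hnd : q.Nondegenerate) {τ : E} (hτ : τ ≠ 0) (htr : Algebra.trace F E 1 ≠ 0) :
    (twistedTraceForm F τ q).Nondegenerate :=
  (LinearMap.IsRefl.nondegenerate_iff_separatingLeft (B := twistedTraceForm F τ q)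
    (isSymm_twistedTraceForm hsymm τ).isRefl).mpr (separatingLeft_twistedTraceForm hnd.1 hτ htr)

end LinearMap.BilinForm

open LinearMap.BilinForm in
/-- With `E/F` quadratic, `τ ∈ E×` of trace zero, `(V,q)` a nondegenerate
quadratic `E`-space and `𝐕_τ = Res_{E/F}(V)` carrying the form `tr_{E/F}(τ q)`, for any
`F`-Lagrangian `L ⊆ 𝐕_τ` one has `L_an = L ∩ τL`, where
`L_an = {x ∈ L : q(x,y) = 0 ∀ y ∈ L}`. -/
theorem stmt1
    (F E V : Type*) [Field F] [Field E] [Algebra F E] [CharZero F]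
    (hquad : Module.finrank F E = 2)
    (τ : E) (hτ : τ ≠ 0) (htr : Algebra.trace F E τ = 0)
    [AddCommGroup V] [Module E V] [Module F V] [IsScalarTower F E V]
    [FiniteDimensional E V]
    (q : LinearMap.BilinForm E V) (hsymm : q.IsSymm) (hnd : q.Nondegenerate)
    (L : Submodule F V)
    (hiso : ∀ x ∈ L, ∀ y ∈ L, Algebra.trace F E (τ * q x y) = 0)
    (hdim : 2 * Module.finrank F L = Module.finrank F V) :
    {x | x ∈ L ∧ ∀ y ∈ L, q x y = 0} = (L : Set V) ∩ ((fun v => τ • v) '' (L : Set V)) := by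
  have : FiniteDimensional F E := Module.finite_of_finrank_eq_succ hquad
  have : FiniteDimensional F V := Module.Finite.trans E V
  have htr1 : Algebra.trace F E 1 ≠ 0 := by
    rw [← map_one (algebraMap F E), trace_algebraMap_of_finrank_eq_two hquad]
    norm_num
  have hL : (twistedTraceForm F τ q).orthogonal L = L :=
    orthogonal_eq_self_of_le_orthogonal (nondegenerate_twistedTraceForm hsymm hnd hτ htr1)
      (fun x hx y hy => hiso y hy x hx) hdim
  ext x
  constructor
  · rintro ⟨hxL, hx⟩
    refine ⟨hxL, τ⁻¹ • x, ?_, smul_inv_smul₀ hτ x⟩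
    rw [← hL, SetLike.mem_coe, mem_orthogonal_iff]
    intro y hy
    simp [← hsymm.eq x y, hx y hy]
  · rintro ⟨hxL, z, hzL, rfl⟩
    refine ⟨hxL, fun y hy => ?_⟩
    have hzy : q (τ • z) y = τ * q z y := by rw [LinearMap.map_smul₂, smul_eq_mul]
    rw [hzy, eq_zero_of_trace_mul_eq_zero_of_trace_mul_mul_eq_zero hquad hτ htr
      (hiso z hzL y hy) (hzy ▸ hiso _ hxL y hy), mul_zero]
end

section
/- In the setting above, L_an equals the set {x ∈ V : q(x,y) = 0 for all y ∈ L}, i.e. the radical of L inside L coincides with the q-orthogonal complement of L in all of V. -/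
/-!
The `F`-form `B = tr_{E/F}(τ q)` of `𝐕_τ` is nondegenerate, because the trace form of the separable
extension `E/F` is. Hence the `B`-orthogonal of an `F`-Lagrangian `L` is `L` itself, and any `x`
with `q(x, L) = 0` is in particular `B`-orthogonal to `L`, so it lies in `L`.
-/

open Module
open LinearMap (BilinForm)

theorem Algebra.eq_zero_of_forall_trace_mul_eq_zero {F E : Type*} [Field F] [Field E] [Algebra F E]
    [FiniteDimensional F E] [Algebra.IsSeparable F E] {τ a : E} (hτ : τ ≠ 0)
    (h : ∀ c, Algebra.trace F E (τ * (c * a)) = 0) : a = 0 := by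
  have hτa : τ * a = 0 := (traceForm_nondegenerate F E).1 (τ * a) fun c => by
    simpa [Algebra.traceForm_apply, mul_comm, mul_left_comm] using h c
  exact (mul_eq_zero.1 hτa).resolve_left hτ

namespace LinearMap.BilinForm

theorem orthogonal_eq_self_of_le_of_two_mul_finrank {K V : Type*} [Field K] [AddCommGroup V]
    [Module K V] [FiniteDimensional K V] {B : BilinForm K V} (hB : B.Nondegenerate)
    {L : Submodule K V} (hiso : L ≤ B.orthogonal L) (hdim : 2 * finrank K L = finrank K V) :
    B.orthogonal L = L := by
  have hrank : finrank K (B.orthogonal L) = finrank K L := by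
    rw [finrank_orthogonal hB L]
    omega
  exact (Submodule.eq_of_le_of_finrank_le hiso hrank.le).symm

section traceRestrict

variable {F E V : Type*} [Field F] [Field E] [Algebra F E]
  [AddCommGroup V] [Module E V] [Module F V] [IsScalarTower F E V]

variable (F) in
/-- The quadratic space `𝐕_τ = Res_{E/F} V`. -/
noncomputable def traceRestrict (τ : E) (q : BilinForm E V) : BilinForm F V :=
  (q.restrictScalars₁₂ F F).compr₂ ((Algebra.trace F E).comp (LinearMap.mulLeft F τ))

@[simp]
theorem traceRestrict_apply (τ : E) (q : BilinForm E V) (x y : V) :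
    traceRestrict F τ q x y = Algebra.trace F E (τ * q x y) :=
  rfl

theorem Nondegenerate.traceRestrict [FiniteDimensional F E] [Algebra.IsSeparable F E]
    {q : BilinForm E V} (hq : q.Nondegenerate) {τ : E} (hτ : τ ≠ 0) :
    (traceRestrict F τ q).Nondegenerate := by
  constructor
  · intro x hx
    refine hq.1 x fun y => Algebra.eq_zero_of_forall_trace_mul_eq_zero (F := F) hτ fun c => ?_
    simpa using hx (c • y)
  · intro y hy
    refine hq.2 y fun x => Algebra.eq_zero_of_forall_trace_mul_eq_zero (F := F) hτ fun c => ?_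
    simpa using hy (c • x)

end traceRestrict

end LinearMap.BilinForm

theorem stmt2_general
    (F E V : Type*) [Field F] [Field E] [Algebra F E] [CharZero F]
    (hquad : Module.finrank F E = 2)
    (τ : E) (hτ : τ ≠ 0)
    [AddCommGroup V] [Module E V] [Module F V] [IsScalarTower F E V]
    [FiniteDimensional E V]
    (q : LinearMap.BilinForm E V) (hsymm : q.IsSymm) (hnd : q.Nondegenerate)
    (L : Submodule F V)
    (hiso : ∀ x ∈ L, ∀ y ∈ L, Algebra.trace F E (τ * q x y) = 0)
    (hdim : 2 * Module.finrank F L = Module.finrank F V) :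
    {x | x ∈ L ∧ ∀ y ∈ L, q x y = 0} = {x : V | ∀ y ∈ L, q x y = 0} := by
  have : FiniteDimensional F E := .of_finrank_pos (by omega)
  have : FiniteDimensional F V := .trans F E V
  have hLagrangian : (BilinForm.traceRestrict F τ q).orthogonal L = L :=
    BilinForm.orthogonal_eq_self_of_le_of_two_mul_finrank (hnd.traceRestrict hτ)
      (fun x hx y hy => hiso y hy x hx) hdim
  ext x
  refine ⟨fun hx => hx.2, fun hx => ⟨?_, hx⟩⟩
  rw [← hLagrangian]
  intro y hy
  simp [hsymm.eq y x, hx y hy]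

/-- In the base change doubling setting, for an `F`-Lagrangian `L` of `𝐕_τ`,
the radical `L_an = {x ∈ L : q(x,L) = 0}` coincides with the `q`-orthogonal complement
`{x ∈ V : q(x,L) = 0}` of `L` in all of `V`. -/
theorem stmt2
    (F E V : Type*) [Field F] [Field E] [Algebra F E] [CharZero F]
    (hquad : Module.finrank F E = 2)
    (τ : E) (hτ : τ ≠ 0) (htr : Algebra.trace F E τ = 0)
    [AddCommGroup V] [Module E V] [Module F V] [IsScalarTower F E V]
    [FiniteDimensional E V]
    (q : LinearMap.BilinForm E V) (hsymm : q.IsSymm) (hnd : q.Nondegenerate)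
    (L : Submodule F V)
    (hiso : ∀ x ∈ L, ∀ y ∈ L, Algebra.trace F E (τ * q x y) = 0)
    (hdim : 2 * Module.finrank F L = Module.finrank F V) :
    {x | x ∈ L ∧ ∀ y ∈ L, q x y = 0} = {x : V | ∀ y ∈ L, q x y = 0} :=
  stmt2_general F E V hquad τ hτ q hsymm hnd L hiso hdim
end

section
/- Let L be a Lagrangian of 𝐕_τ with L_an = {0}. Then the restriction of q to L takes values in F, making L a quadratic space over F, and the natural E-linear map L ⊗_F E → V is an isometry of quadratic spaces over E. -/
open Module TensorProduct

/-! Since `τ ≠ 0`, the functional `e ↦ tr(τ e)` on the two-dimensional `F`-space `E` is nonzero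
(the trace form is nondegenerate), and it kills `F` because `tr τ = 0`; so its kernel is exactly
`F`, and isotropy of `L` for `tr(τ q)` forces `q` to be `F`-valued on `L`. As `τ ∉ F`, `{1, τ}` is
an `F`-basis of `E`, so every element of `E ⊗_F L` is `1 ⊗ x + τ ⊗ y` with `x, y ∈ L`. If
`x + τ y = 0`, then `q(x, z) + τ q(y, z) = 0` with both values in `F`, hence both vanish for all
`z ∈ L`, and `L_an = 0` gives `x = y = 0`. Injectivity then yields bijectivity by counting
`F`-dimensions: `2 · dim L = dim 𝐕_τ`. -/

section TraceZero

variable {F E : Type*} [Field F] [Field E] [Algebra F E]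

theorem trace_mul_eq_zero_iff_mem_range [FiniteDimensional F E] [Algebra.IsSeparable F E]
    (hquad : finrank F E = 2) {τ : E} (hτ : τ ≠ 0) (htr : Algebra.trace F E τ = 0) {e : E} :
    Algebra.trace F E (τ * e) = 0 ↔ e ∈ (algebraMap F E).range := by
  set T : Dual F E := Algebra.trace F E ∘ₗ LinearMap.mulLeft F τ
  have hT : T ≠ 0 := fun h =>
    hτ <| (traceForm_nondegenerate F E).1 τ fun e => LinearMap.congr_fun h e
  have hle : LinearMap.range (Algebra.linearMap F E) ≤ LinearMap.ker T := by
    rintro _ ⟨a, rfl⟩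
    simp [T, ← Algebra.commutes, ← Algebra.smul_def, htr]
  have hker : LinearMap.range (Algebra.linearMap F E) = LinearMap.ker T := by
    refine Submodule.eq_of_le_of_finrank_le hle ?_
    have := Dual.finrank_ker_add_one_of_ne_zero hT
    rw [LinearMap.finrank_range_of_inj (algebraMap F E).injective, finrank_self]
    omega
  exact (SetLike.ext_iff.mp hker e).symm

theorem notMem_range_algebraMap_of_trace_eq_zero [CharZero F] [FiniteDimensional F E] {τ : E}
    (hτ : τ ≠ 0) (htr : Algebra.trace F E τ = 0) : τ ∉ (algebraMap F E).range := by
  rintro ⟨a, rfl⟩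
  rw [Algebra.trace_algebraMap, smul_eq_zero] at htr
  rcases htr with h | rfl
  · exact finrank_pos.ne' h
  · exact hτ (map_zero _)

theorem linearIndependent_one_of_notMem_range {τ : E} (hτ : τ ∉ (algebraMap F E).range) :
    LinearIndependent F ![1, τ] :=
  (LinearIndependent.pair_iff' one_ne_zero).mpr fun a ha =>
    hτ ⟨a, by rwa [Algebra.algebraMap_eq_smul_one]⟩

theorem span_one_eq_top_of_notMem_range (hquad : finrank F E = 2) {τ : E}
    (hτ : τ ∉ (algebraMap F E).range) : Submodule.span F {1, τ} = ⊤ := by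
  have := (linearIndependent_one_of_notMem_range hτ).span_eq_top_of_card_eq_finrank
    (by simp [hquad])
  rwa [Matrix.range_cons_cons_empty] at this

end TraceZero

theorem TensorProduct.exists_eq_tmul_add_tmul_of_span_eq_top {R M N : Type*} [CommSemiring R]
    [AddCommMonoid M] [Module R M] [AddCommMonoid N] [Module R N] {u v : M}
    (h : Submodule.span R {u, v} = ⊤) (z : M ⊗[R] N) : ∃ x y : N, z = u ⊗ₜ x + v ⊗ₜ y := by
  induction z using TensorProduct.induction_on with
  | zero => exact ⟨0, 0, by simp⟩
  | tmul m n =>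
    obtain ⟨a, b, rfl⟩ := Submodule.mem_span_pair.mp (h.ge (Submodule.mem_top (x := m)))
    exact ⟨a • n, b • n, by rw [add_tmul, smul_tmul, smul_tmul]⟩
  | add z w hz hw =>
    obtain ⟨x, y, rfl⟩ := hz
    obtain ⟨x', y', rfl⟩ := hw
    exact ⟨x + x', y + y', by simp only [tmul_add]; abel⟩

section FValued

variable {F E V : Type*} [Field F] [Field E] [Algebra F E]
  [AddCommGroup V] [Module E V] [Module F V]
  {q : LinearMap.BilinForm E V} {L : Submodule F V}

theorem eq_zero_of_add_smul_eq_zero {τ : E} (hτ : LinearIndependent F ![1, τ])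
    (hvals : ∀ x ∈ L, ∀ y ∈ L, q x y ∈ (algebraMap F E).range)
    (han : ∀ x ∈ L, (∀ y ∈ L, q x y = 0) → x = 0)
    {x y : V} (hx : x ∈ L) (hy : y ∈ L) (h : x + τ • y = 0) : x = 0 ∧ y = 0 := by
  suffices horth : ∀ z ∈ L, q x z = 0 ∧ q y z = 0 from
    ⟨han x hx fun z hz => (horth z hz).1, han y hy fun z hz => (horth z hz).2⟩
  intro z hz
  obtain ⟨a, ha⟩ := hvals x hx z hz
  obtain ⟨b, hb⟩ := hvals y hy z hz
  have hab : a • (1 : E) + b • τ = 0 := by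
    simpa [Algebra.smul_def, ha, hb, mul_comm τ] using congr(q $h z)
  obtain ⟨rfl, rfl⟩ := LinearIndependent.pair_iff.mp hτ a b hab
  simp [← ha, ← hb]

theorem injective_liftBaseChange_subtype [IsScalarTower F E V] (hquad : finrank F E = 2) {τ : E}
    (hτ : τ ∉ (algebraMap F E).range)
    (hvals : ∀ x ∈ L, ∀ y ∈ L, q x y ∈ (algebraMap F E).range)
    (han : ∀ x ∈ L, (∀ y ∈ L, q x y = 0) → x = 0) :
    Function.Injective (L.subtype.liftBaseChange E) := by
  refine (injective_iff_map_eq_zero _).mpr fun z hz => ?_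
  obtain ⟨x, y, rfl⟩ := exists_eq_tmul_add_tmul_of_span_eq_top
    (span_one_eq_top_of_notMem_range hquad hτ) z
  rw [map_add, LinearMap.liftBaseChange_tmul, LinearMap.liftBaseChange_tmul, one_smul] at hz
  obtain ⟨hx, hy⟩ := eq_zero_of_add_smul_eq_zero (linearIndependent_one_of_notMem_range hτ)
    hvals han x.2 y.2 hz
  simp [Submodule.coe_eq_zero.mp hx, Submodule.coe_eq_zero.mp hy]

end FValued

theorem stmt3_general
    (F E V : Type*) [Field F] [Field E] [Algebra F E] [CharZero F]
    (hquad : Module.finrank F E = 2)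
    (τ : E) (hτ : τ ≠ 0) (htr : Algebra.trace F E τ = 0)
    [AddCommGroup V] [Module E V] [Module F V] [IsScalarTower F E V]
    [FiniteDimensional E V]
    (q : LinearMap.BilinForm E V)
    (L : Submodule F V)
    (hiso : ∀ x ∈ L, ∀ y ∈ L, Algebra.trace F E (τ * q x y) = 0)
    (hdim : 2 * Module.finrank F L = Module.finrank F V)
    (han : ∀ x ∈ L, (∀ y ∈ L, q x y = 0) → x = 0) :
    (∀ x ∈ L, ∀ y ∈ L, q x y ∈ (algebraMap F E).range) ∧
      Function.Bijective ((L.subtype).liftBaseChange E) := by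
  have : FiniteDimensional F E := .of_finrank_pos (by omega)
  have hvals : ∀ x ∈ L, ∀ y ∈ L, q x y ∈ (algebraMap F E).range := fun x hx y hy =>
    (trace_mul_eq_zero_iff_mem_range hquad hτ htr).mp (hiso x hx y hy)
  have hinj := injective_liftBaseChange_subtype hquad
    (notMem_range_algebraMap_of_trace_eq_zero hτ htr) hvals han
  have : FiniteDimensional F V := .trans F E V
  have hrank : finrank F (E ⊗[F] L) = finrank F V := by
    rw [finrank_tensorProduct, hquad, hdim]
  exact ⟨hvals, hinj, (LinearMap.injective_iff_surjective_of_finrank_eq_finrank hrank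
    (f := (L.subtype.liftBaseChange E).restrictScalars F)).mp hinj⟩

/-- If `L` is a Lagrangian of `𝐕_τ` with `L_an = {0}`, then `q` restricted to
`L` takes values in `F`, and the natural `E`-linear map `E ⊗_F L → V`, `e ⊗ x ↦ e • x`,
is an isometry of quadratic spaces over `E` (it is bijective, and it matches the base
change of the `F`-valued restricted form with `q`, which holds on pure tensors by
`E`-bilinearity). -/
theorem stmt3
    (F E V : Type*) [Field F] [Field E] [Algebra F E] [CharZero F]
    (hquad : Module.finrank F E = 2)
    (τ : E) (hτ : τ ≠ 0) (htr : Algebra.trace F E τ = 0)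
    [AddCommGroup V] [Module E V] [Module F V] [IsScalarTower F E V]
    [FiniteDimensional E V]
    (q : LinearMap.BilinForm E V) (hsymm : q.IsSymm) (hnd : q.Nondegenerate)
    (L : Submodule F V)
    (hiso : ∀ x ∈ L, ∀ y ∈ L, Algebra.trace F E (τ * q x y) = 0)
    (hdim : 2 * Module.finrank F L = Module.finrank F V)
    (han : ∀ x ∈ L, (∀ y ∈ L, q x y = 0) → x = 0) :
    (∀ x ∈ L, ∀ y ∈ L, q x y ∈ (algebraMap F E).range) ∧
      Function.Bijective ((L.subtype).liftBaseChange E) :=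
  stmt3_general F E V hquad τ hτ htr q L hiso hdim han
end

section
/- Let L be a Lagrangian of 𝐕_τ with L_an = {0}. Then the stabilizer of L in O(V) equals O(L), the orthogonal group of the F-quadratic space L, embedded in O(V) via the isometry L ⊗_F E ≅ V. -/
/-!
Since `tr τ = 0` and `tr 1 = 2 ≠ 0`, `τ ∉ F`, so `{1, τ}` spans `E` over `F`. The functional
`y ↦ tr (τ e y)` then vanishes identically as soon as it vanishes at `1` and `τ`, and evaluating
it at `(τ e)⁻¹` forces `e = 0`. Applied to `e = q x y` with `x, τx ∈ L`, this shows that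
anisotropy of `L` gives `L ∩ τL = 0`. Hence an `F`-basis of `L` is `E`-linearly independent in
`V`, and by the dimension count it is an `E`-basis of `V`. An isometry of `L` therefore extends
`E`-linearly along it, and the extension is an isometry of `q` since it is so on that basis.
-/

open Module

section QuadraticExtension

variable {F E : Type*} [Field F] [Field E] [Algebra F E] [CharZero F] {τ : E}

theorem linearIndependent_one_of_trace_eq_zero [FiniteDimensional F E] (hτ : τ ≠ 0)
    (htr : Algebra.trace F E τ = 0) : LinearIndependent F ![1, τ] := by
  refine (LinearIndependent.pair_iff' one_ne_zero).2 fun a ha => hτ ?_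
  have h2 : (finrank F E : F) * a = 0 := by
    rw [← nsmul_eq_mul, ← Algebra.trace_algebraMap, Algebra.algebraMap_eq_smul_one, ha, htr]
  rw [← ha, (mul_eq_zero.1 h2).resolve_left (Nat.cast_ne_zero.2 finrank_pos.ne'), zero_smul]

theorem span_one_eq_top_of_trace_eq_zero (hquad : finrank F E = 2) (hτ : τ ≠ 0)
    (htr : Algebra.trace F E τ = 0) : Submodule.span F {1, τ} = ⊤ := by
  have : FiniteDimensional F E := .of_finrank_pos (by omega)
  simpa [Set.pair_comm] using
    (linearIndependent_one_of_trace_eq_zero hτ htr).span_eq_top_of_card_eq_finrank'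
      (by simp [hquad])

theorem eq_zero_of_trace_mul_eq_zero (hquad : finrank F E = 2) (hτ : τ ≠ 0)
    (htr : Algebra.trace F E τ = 0) {e : E} (h₁ : Algebra.trace F E (τ * e) = 0)
    (h₂ : Algebra.trace F E (τ * (τ * e)) = 0) : e = 0 := by
  by_contra he
  let φ : E →ₗ[F] F := (Algebra.trace F E).comp (LinearMap.mulLeft F (τ * e))
  have hφ : φ = 0 := by
    refine LinearMap.ext_on (span_one_eq_top_of_trace_eq_zero hquad hτ htr) ?_
    simp [Set.EqOn, φ, h₁, ← h₂, mul_comm]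
  have h1 : φ (τ * e)⁻¹ = 0 := by rw [hφ, LinearMap.zero_apply]
  rw [LinearMap.comp_apply, LinearMap.mulLeft_apply, mul_inv_cancel₀ (mul_ne_zero hτ he),
    ← map_one (algebraMap F E), Algebra.trace_algebraMap, hquad] at h1
  simp at h1

end QuadraticExtension

theorem Submodule.map_eq_self_of_forall_apply_eq {R M : Type*} [Ring R] [AddCommGroup M]
    [Module R M] {L : Submodule R M} (g : M →ₗ[R] M) (h : L ≃ₗ[R] L)
    (hg : ∀ x : L, g x = h x) : L.map g = L := by
  ext v
  constructor
  · rintro ⟨x, hx, rfl⟩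
    exact hg ⟨x, hx⟩ ▸ (h _).2
  · intro hv
    refine ⟨h.symm ⟨v, hv⟩, (h.symm _).2, ?_⟩
    rw [hg, LinearEquiv.apply_symm_apply]

section ExtendScalars

variable {F E V : Type*} [Field F] [Field E] [Algebra F E] [AddCommGroup V] [Module E V]
  [Module F V] {τ : E} {L : Submodule F V}

theorem eq_zero_of_mem_of_smul_mem [CharZero F] (hquad : finrank F E = 2) (hτ : τ ≠ 0)
    (htr : Algebra.trace F E τ = 0) (q : LinearMap.BilinForm E V)
    (hiso : ∀ x ∈ L, ∀ y ∈ L, Algebra.trace F E (τ * q x y) = 0)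
    (han : ∀ x ∈ L, (∀ y ∈ L, q x y = 0) → x = 0) :
    ∀ x ∈ L, τ • x ∈ L → x = 0 := fun x hx hτx =>
  han x hx fun y hy => eq_zero_of_trace_mul_eq_zero hquad hτ htr (hiso x hx y hy) <| by
    simpa using hiso (τ • x) hτx y hy

variable [IsScalarTower F E V]

theorem linearIndependent_extendScalars_of_mem (hspan : Submodule.span F {1, τ} = ⊤)
    (hL : ∀ x ∈ L, τ • x ∈ L → x = 0) {ι : Type*} [Fintype ι] {v : ι → V}
    (hv : LinearIndependent F v) (hvL : ∀ i, v i ∈ L) : LinearIndependent E v := by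
  rw [Fintype.linearIndependent_iff] at hv ⊢
  intro c hc
  choose a b hab using fun i =>
    Submodule.mem_span_pair.1 (hspan.ge (Submodule.mem_top (x := c i)))
  have hsplit : ∑ i, c i • v i = ∑ i, a i • v i + τ • ∑ i, b i • v i := by
    simp_rw [← hab, add_smul, Finset.sum_add_distrib, Finset.smul_sum, smul_assoc, one_smul,
      smul_comm τ]
  have hx : ∑ i, a i • v i ∈ L := L.sum_mem fun i _ => L.smul_mem _ (hvL i)
  have hy : ∑ i, b i • v i ∈ L := L.sum_mem fun i _ => L.smul_mem _ (hvL i)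
  rw [hsplit] at hc
  have hy0 : ∑ i, b i • v i = 0 :=
    hL _ hy (by rw [eq_neg_of_add_eq_zero_right hc]; exact L.neg_mem hx)
  have hx0 : ∑ i, a i • v i = 0 := by simpa [hy0] using hc
  intro i
  rw [← hab i, hv a hx0 i, hv b hy0 i, zero_smul, zero_smul, add_zero]

variable [FiniteDimensional E V]

noncomputable def Module.Basis.extendScalarsOfMem (hspan : Submodule.span F {1, τ} = ⊤)
    (hL : ∀ x ∈ L, τ • x ∈ L → x = 0) (hdim : finrank F L = finrank E V) {ι : Type*}
    [Fintype ι] (b : Basis ι F L) : Basis ι E V :=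
  have hli := linearIndependent_extendScalars_of_mem hspan hL
    (b.linearIndependent.map' L.subtype L.ker_subtype) fun i => (b i).2
  have hcard : Fintype.card ι = finrank E V := by rw [← hdim, finrank_eq_card_basis b]
  .mk hli (hli.span_eq_top_of_card_eq_finrank' hcard).ge

@[simp]
theorem Module.Basis.coe_extendScalarsOfMem (hspan : Submodule.span F {1, τ} = ⊤)
    (hL : ∀ x ∈ L, τ • x ∈ L → x = 0) (hdim : finrank F L = finrank E V) {ι : Type*}
    [Fintype ι] (b : Basis ι F L) :
    ⇑(b.extendScalarsOfMem hspan hL hdim) = fun i => (b i : V) := by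
  simp [Module.Basis.extendScalarsOfMem]; rfl

theorem exists_isometry_extending [FiniteDimensional F L] (hspan : Submodule.span F {1, τ} = ⊤)
    (hL : ∀ x ∈ L, τ • x ∈ L → x = 0) (hdim : finrank F L = finrank E V)
    (q : LinearMap.BilinForm E V) (h : L ≃ₗ[F] L) (hh : ∀ x y : L, q (h x) (h y) = q x y) :
    ∃ g : V ≃ₗ[E] V, (∀ x y, q (g x) (g y) = q x y) ∧ ∀ x : L, g x = h x := by
  let b := finBasis F L
  let bV := b.extendScalarsOfMem hspan hL hdim
  let g := bV.equiv ((b.map h).extendScalarsOfMem hspan hL hdim) (.refl _)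
  have hgb : ∀ i, g (b i) = h (b i) := fun i => by
    simpa [bV] using bV.equiv_apply i ((b.map h).extendScalarsOfMem hspan hL hdim) (Equiv.refl _)
  have hgh : (g.restrictScalars F).toLinearMap ∘ₗ L.subtype = L.subtype ∘ₗ h :=
    b.ext fun i => hgb i
  refine ⟨g, fun x y => ?_, fun x => LinearMap.congr_fun hgh x⟩
  have hq : q.compl₁₂ g.toLinearMap g.toLinearMap = q :=
    LinearMap.ext_basis bV bV fun i j => by simp [bV, hgb, hh]
  exact LinearMap.congr_fun₂ hq x y

end ExtendScalars

theorem stmt7_general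
    (F E V : Type*) [Field F] [Field E] [Algebra F E] [CharZero F]
    (hquad : Module.finrank F E = 2)
    (τ : E) (hτ : τ ≠ 0) (htr : Algebra.trace F E τ = 0)
    [AddCommGroup V] [Module E V] [Module F V] [IsScalarTower F E V]
    [FiniteDimensional E V]
    (q : LinearMap.BilinForm E V)
    (L : Submodule F V)
    (hiso : ∀ x ∈ L, ∀ y ∈ L, Algebra.trace F E (τ * q x y) = 0)
    (hdim : 2 * Module.finrank F L = Module.finrank F V)
    (han : ∀ x ∈ L, (∀ y ∈ L, q x y = 0) → x = 0) :
    (∀ g : V ≃ₗ[E] V, (∀ x y : V, q (g x) (g y) = q x y) →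
      L.map (LinearMap.restrictScalars F (g : V →ₗ[E] V)) = L →
      ∃ h : ↥L ≃ₗ[F] ↥L, (∀ x y : ↥L, q (h x : V) (h y : V) = q (x : V) (y : V)) ∧
        ∀ x : ↥L, g (x : V) = (h x : V)) ∧
    (∀ h : ↥L ≃ₗ[F] ↥L, (∀ x y : ↥L, q (h x : V) (h y : V) = q (x : V) (y : V)) →
      ∃ g : V ≃ₗ[E] V, (∀ x y : V, q (g x) (g y) = q x y) ∧
        L.map (LinearMap.restrictScalars F (g : V →ₗ[E] V)) = L ∧
        ∀ x : ↥L, g (x : V) = (h x : V)) := by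
  refine ⟨fun g hg hmap => ⟨(g.restrictScalars F).ofSubmodules L L hmap, fun x y => hg x y,
    fun x => rfl⟩, fun h hh => ?_⟩
  have : FiniteDimensional F E := .of_finrank_pos (by omega)
  have : FiniteDimensional F V := Module.Finite.trans E V
  have hLV : finrank F L = finrank E V := by
    have hFV := finrank_mul_finrank F E V
    rw [hquad] at hFV
    omega
  obtain ⟨g, hgq, hgh⟩ :=
    exists_isometry_extending (span_one_eq_top_of_trace_eq_zero hquad hτ htr)
      (eq_zero_of_mem_of_smul_mem hquad hτ htr q hiso han) hLV q h hh
  exact ⟨g, hgq, Submodule.map_eq_self_of_forall_apply_eq _ h hgh, hgh⟩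

/-- Let `L` be a Lagrangian of `𝐕_τ` with `L_an = {0}`, so that `q` is
`F`-valued on `L` and `L ⊗_F E ≅ V`.  Then the stabilizer of `L` in `O(V)` equals
`O(L)`: every `q`-isometry of `V` stabilizing `L` restricts to an isometry of the
`F`-quadratic space `L`, and conversely every isometry of `L` extends (via
`L ⊗_F E ≅ V`) to a `q`-isometry of `V` stabilizing `L`. -/
theorem stmt7
    (F E V : Type*) [Field F] [Field E] [Algebra F E] [CharZero F]
    (hquad : Module.finrank F E = 2)
    (τ : E) (hτ : τ ≠ 0) (htr : Algebra.trace F E τ = 0)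
    [AddCommGroup V] [Module E V] [Module F V] [IsScalarTower F E V]
    [FiniteDimensional E V]
    (q : LinearMap.BilinForm E V) (hsymm : q.IsSymm) (hnd : q.Nondegenerate)
    (L : Submodule F V)
    (hiso : ∀ x ∈ L, ∀ y ∈ L, Algebra.trace F E (τ * q x y) = 0)
    (hdim : 2 * Module.finrank F L = Module.finrank F V)
    (han : ∀ x ∈ L, (∀ y ∈ L, q x y = 0) → x = 0) :
    (∀ g : V ≃ₗ[E] V, (∀ x y : V, q (g x) (g y) = q x y) →
      L.map (LinearMap.restrictScalars F (g : V →ₗ[E] V)) = L →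
      ∃ h : ↥L ≃ₗ[F] ↥L, (∀ x y : ↥L, q (h x : V) (h y : V) = q (x : V) (y : V)) ∧
        ∀ x : ↥L, g (x : V) = (h x : V)) ∧
    (∀ h : ↥L ≃ₗ[F] ↥L, (∀ x y : ↥L, q (h x : V) (h y : V) = q (x : V) (y : V)) →
      ∃ g : V ≃ₗ[E] V, (∀ x y : V, q (g x) (g y) = q x y) ∧
        L.map (LinearMap.restrictScalars F (g : V →ₗ[E] V)) = L ∧
        ∀ x : ↥L, g (x : V) = (h x : V)) :=
  stmt7_general F E V hquad τ hτ htr q L hiso hdim han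
end

section
/- Let L be a Lagrangian of 𝐕_τ with L_an ≠ {0}, let P = Stab_{O(V)}(L_an) (a proper parabolic subgroup of O(V)) with unipotent radical N = {g ∈ O(V) : g|_{L_an} = id and g induces the identity on L_an^⊥/L_an}. Then N is contained in Stab_{O(V)}(L), and N is normal in Stab_{O(V)}(L). -/
/-!
Since `L_an` is the radical of `q` restricted to `L`, we have `L_an ⊆ L ⊆ L_an^⊥`. An element
`g ∈ N` moves every `x ∈ L_an^⊥` only by an element `g x - x ∈ L_an ⊆ L`, so `g` and (by the same
argument) `g⁻¹` map `L` into `L`. For normality, an isometry stabilizing `L` stabilizes its radical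
`L_an`, hence normalizes the unipotent radical `N` of `Stab(L_an)`.
-/

open LinearMap (BilinForm)

theorem Submodule.map_equiv_eq_self_iff {R M : Type*} [Semiring R] [AddCommMonoid M] [Module R M]
    (p : Submodule R M) (e : M ≃ₗ[R] M) :
    p.map (e : M →ₗ[R] M) = p ↔ ∀ x, e x ∈ p ↔ x ∈ p := by
  refine ⟨fun h x => ?_, fun h => Submodule.ext fun x => ?_⟩
  · conv_lhs => rw [← h, Submodule.mem_map_equiv, e.symm_apply_apply]
  · rw [Submodule.mem_map_equiv, ← h, e.apply_symm_apply]

namespace LinearMap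

variable {E V : Type*} [CommRing E] [AddCommGroup V] [Module E V] {q : BilinForm E V}

theorem IsOrthogonal.symm {g : V ≃ₗ[E] V} (hg : q.IsOrthogonal g) : q.IsOrthogonal g.symm :=
  fun x y => by rw [← hg, g.apply_symm_apply, g.apply_symm_apply]

theorem IsOrthogonal.conj {g u : V ≃ₗ[E] V} (hg : q.IsOrthogonal g) (hu : q.IsOrthogonal u) :
    q.IsOrthogonal ((g.symm.trans u).trans g) :=
  fun x y => by simp only [LinearEquiv.trans_apply, hg (u _), hu _, hg.symm x y]

namespace BilinForm

theorem symm_mem_orthogonal {W : Submodule E V} {g : V ≃ₗ[E] V} (hg : q.IsOrthogonal g)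
    (hgW : ∀ z ∈ W, g z ∈ W) {x : V} (hx : x ∈ q.orthogonal W) : g.symm x ∈ q.orthogonal W :=
  fun z hz => by
    change q z (g.symm x) = 0
    rw [← hg, g.apply_symm_apply]
    exact hx _ (hgW z hz)

def unipotentRadical (q : BilinForm E V) (W : Submodule E V) : Set (V ≃ₗ[E] V) :=
  {g | q.IsOrthogonal g ∧ (∀ x ∈ W, g x = x) ∧ ∀ x ∈ q.orthogonal W, g x - x ∈ W}

variable {W : Submodule E V}

theorem symm_sub_mem_of_mem_unipotentRadical {g : V ≃ₗ[E] V} (hg : g ∈ q.unipotentRadical W)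
    {x : V} (hx : x ∈ q.orthogonal W) : g.symm x - x ∈ W := by
  obtain ⟨hgq, hfix, hmod⟩ := hg
  have hgW : ∀ z ∈ W, g z ∈ W := fun z hz => by rwa [hfix z hz]
  have h := W.neg_mem (hmod _ (symm_mem_orthogonal hgq hgW hx))
  rwa [g.apply_symm_apply, neg_sub] at h

theorem conj_mem_unipotentRadical {g u : V ≃ₗ[E] V} (hg : q.IsOrthogonal g)
    (hgW : ∀ z, g z ∈ W ↔ z ∈ W) (hu : u ∈ q.unipotentRadical W) :
    (g.symm.trans u).trans g ∈ q.unipotentRadical W := by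
  obtain ⟨huq, hufix, humod⟩ := hu
  have hgsW : ∀ z ∈ W, g.symm z ∈ W := fun z hz => by rwa [← hgW, g.apply_symm_apply]
  refine ⟨hg.conj huq, fun x hx => ?_, fun x hx => ?_⟩
  · simp only [LinearEquiv.trans_apply, hufix _ (hgsW x hx), g.apply_symm_apply]
  · have h := (hgW _).2 (humod _ (symm_mem_orthogonal hg (fun z => (hgW z).2) hx))
    rwa [map_sub, g.apply_symm_apply] at h

variable {F : Type*} [Semiring F] [Module F V] {L : Submodule F V}

theorem apply_mem_of_sub_mem (hWL : ∀ z ∈ W, z ∈ L) (hLW : ∀ x ∈ L, x ∈ q.orthogonal W)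
    {f : V → V} (hf : ∀ x ∈ q.orthogonal W, f x - x ∈ W) {x : V} (hx : x ∈ L) : f x ∈ L := by
  simpa using L.add_mem (hWL _ (hf x (hLW x hx))) hx

theorem apply_mem_iff_of_mem_unipotentRadical (hWL : ∀ z ∈ W, z ∈ L)
    (hLW : ∀ x ∈ L, x ∈ q.orthogonal W) {g : V ≃ₗ[E] V} (hg : g ∈ q.unipotentRadical W) (x : V) :
    g x ∈ L ↔ x ∈ L := by
  refine ⟨fun hx => ?_, apply_mem_of_sub_mem hWL hLW hg.2.2⟩
  simpa using apply_mem_of_sub_mem hWL hLW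
    (fun y hy => symm_sub_mem_of_mem_unipotentRadical hg hy) hx

theorem apply_mem_radical (hW : ∀ x, x ∈ W ↔ x ∈ L ∧ ∀ y ∈ L, q x y = 0) {g : V ≃ₗ[E] V}
    (hg : q.IsOrthogonal g) (hgL : ∀ x, g x ∈ L ↔ x ∈ L) {z : V} (hz : z ∈ W) : g z ∈ W := by
  obtain ⟨hzL, hzrad⟩ := (hW z).1 hz
  refine (hW _).2 ⟨(hgL z).2 hzL, fun y hy => ?_⟩
  rw [← g.apply_symm_apply y, hg]
  exact hzrad _ (by rwa [← hgL, g.apply_symm_apply])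

theorem apply_mem_radical_iff (hW : ∀ x, x ∈ W ↔ x ∈ L ∧ ∀ y ∈ L, q x y = 0) {g : V ≃ₗ[E] V}
    (hg : q.IsOrthogonal g) (hgL : ∀ x, g x ∈ L ↔ x ∈ L) (z : V) : g z ∈ W ↔ z ∈ W := by
  have hgsL : ∀ x, g.symm x ∈ L ↔ x ∈ L := fun x => by rw [← hgL, g.apply_symm_apply]
  refine ⟨fun hz => ?_, apply_mem_radical hW hg hgL⟩
  simpa using apply_mem_radical hW hg.symm hgsL hz

end BilinForm

end LinearMap

open LinearMap.BilinForm in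
theorem stmt8_general
    (F E V : Type*) [Field F] [Field E] [Algebra F E]
    [AddCommGroup V] [Module E V] [Module F V] [IsScalarTower F E V]
    (q : LinearMap.BilinForm E V)
    (L : Submodule F V)
    (Lan : Submodule E V)
    (hLan : (Lan : Set V) = {x | x ∈ L ∧ ∀ y ∈ L, q x y = 0})
    (InStab InN : (V ≃ₗ[E] V) → Prop)
    (hStab : ∀ g, InStab g ↔ (∀ x y : V, q (g x) (g y) = q x y) ∧
      L.map (LinearMap.restrictScalars F (g : V →ₗ[E] V)) = L)
    (hInN : ∀ g, InN g ↔ (∀ x y : V, q (g x) (g y) = q x y) ∧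
      (∀ x ∈ Lan, g x = x) ∧
      (∀ x ∈ LinearMap.BilinForm.orthogonal q Lan, g x - x ∈ Lan)) :
    (∀ g, InN g → InStab g) ∧
      (∀ g u, InStab g → InN u → InN ((g.symm.trans u).trans g)) := by
  have hW : ∀ x, x ∈ Lan ↔ x ∈ L ∧ ∀ y ∈ L, q x y = 0 := Set.ext_iff.mp hLan
  have hLanL : ∀ z ∈ Lan, z ∈ L := fun z hz => ((hW z).1 hz).1
  have hLLan : ∀ x ∈ L, x ∈ q.orthogonal Lan := fun x hx z hz => ((hW z).1 hz).2 x hx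
  have hStab' : ∀ g, InStab g ↔ q.IsOrthogonal g ∧ ∀ x, g x ∈ L ↔ x ∈ L := fun g =>
    (hStab g).trans (and_congr_right' (L.map_equiv_eq_self_iff (g.restrictScalars F)))
  have hN : ∀ g, InN g ↔ g ∈ q.unipotentRadical Lan := hInN
  refine ⟨fun g hg => ?_, fun g u hg hu => ?_⟩
  · rw [hN] at hg
    exact (hStab' g).2 ⟨hg.1, apply_mem_iff_of_mem_unipotentRadical hLanL hLLan hg⟩
  · obtain ⟨hgq, hgL⟩ := (hStab' g).1 hg
    rw [hN] at hu ⊢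
    exact conj_mem_unipotentRadical hgq (apply_mem_radical_iff hW hgq hgL) hu

/-- Let `L` be a Lagrangian of `𝐕_τ` with radical `L_an ≠ 0`, and let `N` be
the unipotent radical of the parabolic `P = Stab_{O(V)}(L_an)`, i.e. the set of
`q`-isometries acting as the identity on `L_an` and on `L_an^⊥/L_an`.  Then `N` is
contained in `Stab_{O(V)}(L)` and is normal in it. -/
theorem stmt8
    (F E V : Type*) [Field F] [Field E] [Algebra F E] [CharZero F]
    (hquad : Module.finrank F E = 2)
    (τ : E) (hτ : τ ≠ 0) (htr : Algebra.trace F E τ = 0)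
    [AddCommGroup V] [Module E V] [Module F V] [IsScalarTower F E V]
    [FiniteDimensional E V]
    (q : LinearMap.BilinForm E V) (hsymm : q.IsSymm) (hnd : q.Nondegenerate)
    (L : Submodule F V)
    (hiso : ∀ x ∈ L, ∀ y ∈ L, Algebra.trace F E (τ * q x y) = 0)
    (hdim : 2 * Module.finrank F L = Module.finrank F V)
    (Lan : Submodule E V)
    (hLan : (Lan : Set V) = {x | x ∈ L ∧ ∀ y ∈ L, q x y = 0})
    (hne : Lan ≠ ⊥)
    (InStab InN : (V ≃ₗ[E] V) → Prop)
    (hStab : ∀ g, InStab g ↔ (∀ x y : V, q (g x) (g y) = q x y) ∧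
      L.map (LinearMap.restrictScalars F (g : V →ₗ[E] V)) = L)
    (hInN : ∀ g, InN g ↔ (∀ x y : V, q (g x) (g y) = q x y) ∧
      (∀ x ∈ Lan, g x = x) ∧
      (∀ x ∈ LinearMap.BilinForm.orthogonal q Lan, g x - x ∈ Lan)) :
    (∀ g, InN g → InStab g) ∧
      (∀ g u, InStab g → InN u → InN ((g.symm.trans u).trans g)) :=
  stmt8_general F E V q L Lan hLan InStab InN hStab hInN
end

section
/- Let W_F = X_F ⊕ Y_F be a polarized symplectic F-space of dimension 2n with dual bases e₁,…,eₙ of X_F and e₁',…,eₙ' of Y_F, and let W = W_F ⊗_F E, 𝐖 = Res_{E/F}(W) with form tr_{E/F}(⟨-,-⟩_W). For 0 ≤ k ≤ n let X_k = E e₁ ⊕ ⋯ ⊕ E e_k, X'_{F,n−k} = F e_{k+1} ⊕ ⋯ ⊕ F eₙ, Y'_{F,n−k} = F e'_{k+1} ⊕ ⋯ ⊕ F e'ₙ, and L_k := X_k ⊕ X'_{F,n−k} ⊕ τ Y'_{F,n−k}. Then L_k is a Lagrangian of 𝐖 and its radical L_{k,an} = {x ∈ L_k : ⟨x, L_k⟩_W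 = 0} equals X_k. -/
/-!
Writing `W = (Fin n → E) × (Fin n → E)`, the subspace `L_k` splits coordinatewise: its `i`-th
coordinate pair is `E × 0` for `i < k` and `F × F τ` for `i ≥ k`. Each pair has `F`-dimension
`2 = [E : F]`, which gives `dim_F L_k = 2n = dim_F 𝐖 / 2`. The pairing of two vectors of `L_k` is a
sum of products from `F · F τ ⊆ F τ ⊆ ker tr_{E/F}`, so `L_k` is isotropic. Pairing against
`(0, τ eᵢ')` and `(eᵢ, 0)` for `i ≥ k` shows that the radical kills every coordinate outside `X_k`.
-/

open Module

namespace Submodule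

variable {R ι : Type*} [Semiring R]

def piUnivEquiv {φ : ι → Type*} [∀ i, AddCommMonoid (φ i)] [∀ i, Module R (φ i)]
    (p : ∀ i, Submodule R (φ i)) : pi Set.univ p ≃ₗ[R] ∀ i, p i where
  toFun x i := ⟨x.1 i, x.2 i (Set.mem_univ i)⟩
  map_add' _ _ := rfl
  map_smul' _ _ := rfl
  invFun f := ⟨fun i => f i, fun i _ => (f i).2⟩
  left_inv _ := rfl
  right_inv _ := rfl

def prodEquiv {M N : Type*} [AddCommMonoid M] [AddCommMonoid N] [Module R M] [Module R N]
    (p : Submodule R M) (q : Submodule R N) : p.prod q ≃ₗ[R] p × q where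
  toFun x := (⟨x.1.1, x.2.1⟩, ⟨x.1.2, x.2.2⟩)
  map_add' _ _ := rfl
  map_smul' _ _ := rfl
  invFun x := ⟨(x.1.1, x.2.1), ⟨x.1.2, x.2.2⟩⟩
  left_inv _ := rfl
  right_inv _ := rfl

variable {K : Type*} [DivisionRing K]

theorem finrank_pi_univ [Fintype ι] {φ : ι → Type*} [∀ i, AddCommGroup (φ i)]
    [∀ i, Module K (φ i)] [∀ i, FiniteDimensional K (φ i)] (p : ∀ i, Submodule K (φ i)) :
    finrank K (pi Set.univ p) = ∑ i, finrank K (p i) := by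
  rw [(piUnivEquiv p).finrank_eq, finrank_pi_fintype]

theorem finrank_prod {M N : Type*} [AddCommGroup M] [AddCommGroup N] [Module K M] [Module K N]
    [FiniteDimensional K M] [FiniteDimensional K N] (p : Submodule K M) (q : Submodule K N) :
    finrank K (p.prod q) = finrank K p + finrank K q := by
  rw [(prodEquiv p q).finrank_eq, Module.finrank_prod]

end Submodule

section SymplecticPairing

variable {R : Type*} [CommRing R] {n : ℕ}

def symplecticPairing (p r : (Fin n → R) × (Fin n → R)) : R :=
  ∑ i, (p.1 i * r.2 i - p.2 i * r.1 i)

theorem symplecticPairing_zero_single (p : (Fin n → R) × (Fin n → R)) (i : Fin n) (c : R) :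
    symplecticPairing p (0, Pi.single i c) = p.1 i * c := by
  simp [symplecticPairing, Pi.single_apply]

theorem symplecticPairing_single_zero (p : (Fin n → R) × (Fin n → R)) (i : Fin n) (c : R) :
    symplecticPairing p (Pi.single i c, 0) = -(p.2 i * c) := by
  simp [symplecticPairing, Pi.single_apply]

end SymplecticPairing

section Lagrangian

variable (F : Type*) {E : Type*} [Field F] [Field E] [Algebra F E] {n : ℕ}

variable (E) in
def lagrangianFst (k : ℕ) (i : Fin n) : Submodule F E :=
  if (i : ℕ) < k then ⊤ else 1

def lagrangianSnd (τ : E) (k : ℕ) (i : Fin n) : Submodule F E :=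
  if (i : ℕ) < k then ⊥ else F ∙ τ

def lagrangian (τ : E) (n k : ℕ) : Submodule F ((Fin n → E) × (Fin n → E)) :=
  (Submodule.pi Set.univ (lagrangianFst F E k)).prod (Submodule.pi Set.univ (lagrangianSnd F τ k))

variable {F} {k : ℕ} {i : Fin n}

theorem lagrangianFst_of_lt (hi : (i : ℕ) < k) : lagrangianFst F E k i = ⊤ := if_pos hi

theorem lagrangianFst_of_le (hi : k ≤ (i : ℕ)) : lagrangianFst F E k i = 1 :=
  if_neg hi.not_gt

theorem lagrangianSnd_of_lt (τ : E) (hi : (i : ℕ) < k) : lagrangianSnd F τ k i = ⊥ := if_pos hi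

theorem lagrangianSnd_of_le (τ : E) (hi : k ≤ (i : ℕ)) : lagrangianSnd F τ k i = F ∙ τ :=
  if_neg hi.not_gt

theorem mem_lagrangianFst {x : E} :
    x ∈ lagrangianFst F E k i ↔ (k ≤ (i : ℕ) → ∃ a : F, x = algebraMap F E a) := by
  rcases lt_or_ge (i : ℕ) k with hi | hi
  · simp [lagrangianFst_of_lt hi, hi]
  · simp [lagrangianFst_of_le hi, hi, Submodule.mem_one, eq_comm]

theorem mem_lagrangianSnd {τ y : E} :
    y ∈ lagrangianSnd F τ k i ↔
      ((i : ℕ) < k → y = 0) ∧ (k ≤ (i : ℕ) → ∃ b : F, y = τ * algebraMap F E b) := by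
  rcases lt_or_ge (i : ℕ) k with hi | hi
  · simp [lagrangianSnd_of_lt τ hi, hi]
  · simp [lagrangianSnd_of_le τ hi, hi, hi.not_gt, Submodule.mem_span_singleton, Algebra.smul_def,
      mul_comm, eq_comm]

theorem coe_lagrangian (τ : E) (n k : ℕ) :
    (lagrangian F τ n k : Set ((Fin n → E) × (Fin n → E))) =
      {p | (∀ i : Fin n, (i : ℕ) < k → p.2 i = 0) ∧ ∀ i : Fin n, k ≤ (i : ℕ) →
        ((∃ a : F, p.1 i = algebraMap F E a) ∧ (∃ b : F, p.2 i = τ * algebraMap F E b))} := by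
  ext p
  simp only [SetLike.mem_coe, lagrangian, Submodule.mem_prod, Submodule.mem_pi, Set.mem_univ,
    true_implies, mem_lagrangianFst, mem_lagrangianSnd, Set.mem_ofPred_eq]
  grind

theorem zero_single_mem_lagrangian (τ : E) (hi : k ≤ (i : ℕ)) :
    ((0 : Fin n → E), Pi.single i τ) ∈ lagrangian F τ n k :=
  ⟨zero_mem _, Submodule.le_comap_single_pi _ <| by
    rw [lagrangianSnd_of_le τ hi]; exact Submodule.mem_span_singleton_self τ⟩

theorem single_one_zero_mem_lagrangian (τ : E) (hi : k ≤ (i : ℕ)) :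
    (Pi.single i (1 : E), (0 : Fin n → E)) ∈ lagrangian F τ n k :=
  ⟨Submodule.le_comap_single_pi _ <| by
    rw [lagrangianFst_of_le hi]; exact Submodule.mem_one.mpr ⟨1, map_one _⟩, zero_mem _⟩

theorem two_mul_finrank_lagrangian (hE : finrank F E = 2) {τ : E} (hτ : τ ≠ 0) :
    2 * finrank F (lagrangian F τ n k) = finrank F ((Fin n → E) × (Fin n → E)) := by
  have : FiniteDimensional F E := Module.finite_of_finrank_eq_succ hE
  have hcoord (i : Fin n) :
      finrank F (lagrangianFst F E k i) + finrank F (lagrangianSnd F τ k i) = finrank F E := by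
    rcases lt_or_ge (i : ℕ) k with hi | hi
    · rw [lagrangianFst_of_lt hi, lagrangianSnd_of_lt τ hi, finrank_top, finrank_bot, add_zero]
    · rw [lagrangianFst_of_le hi, lagrangianSnd_of_le τ hi, ← Algebra.toSubmodule_bot,
        Subalgebra.finrank_toSubmodule, Subalgebra.finrank_bot, finrank_span_singleton hτ, hE]
  rw [lagrangian, Submodule.finrank_prod, Submodule.finrank_pi_univ, Submodule.finrank_pi_univ,
    ← Finset.sum_add_distrib, Module.finrank_prod, finrank_pi_fintype, two_mul]
  simp only [hcoord]

theorem lagrangianFst_mul_lagrangianSnd_le (τ : E) :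
    lagrangianFst F E k i * lagrangianSnd F τ k i ≤ F ∙ τ := by
  rcases lt_or_ge (i : ℕ) k with hi | hi
  · simp [lagrangianFst_of_lt hi, lagrangianSnd_of_lt τ hi]
  · rw [lagrangianFst_of_le hi, lagrangianSnd_of_le τ hi, Submodule.one_mul]

theorem symplecticPairing_mem_span_of_mem_lagrangian {τ : E} {p r : (Fin n → E) × (Fin n → E)}
    (hp : p ∈ lagrangian F τ n k) (hr : r ∈ lagrangian F τ n k) :
    symplecticPairing p r ∈ F ∙ τ := by
  simp only [lagrangian, Submodule.mem_prod, Submodule.mem_pi, Set.mem_univ, true_implies] at hp hr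
  refine Submodule.sum_mem _ fun i _ => Submodule.sub_mem _ ?_ ?_
  · exact lagrangianFst_mul_lagrangianSnd_le τ (Submodule.mul_mem_mul (hp.1 i) (hr.2 i))
  · rw [mul_comm]
    exact lagrangianFst_mul_lagrangianSnd_le τ (Submodule.mul_mem_mul (hr.1 i) (hp.2 i))

theorem trace_symplecticPairing_of_mem_lagrangian {τ : E} (hτ : Algebra.trace F E τ = 0)
    {p r : (Fin n → E) × (Fin n → E)} (hp : p ∈ lagrangian F τ n k)
    (hr : r ∈ lagrangian F τ n k) : Algebra.trace F E (symplecticPairing p r) = 0 := by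
  obtain ⟨c, hc⟩ := Submodule.mem_span_singleton.mp
    (symplecticPairing_mem_span_of_mem_lagrangian hp hr)
  rw [← hc, map_smul, hτ, smul_zero]

theorem radical_lagrangian {τ : E} (hτ : τ ≠ 0) :
    {p ∈ (lagrangian F τ n k : Set ((Fin n → E) × (Fin n → E))) |
        ∀ r ∈ (lagrangian F τ n k : Set ((Fin n → E) × (Fin n → E))), symplecticPairing p r = 0} =
      {p | (∀ i : Fin n, k ≤ (i : ℕ) → p.1 i = 0) ∧ p.2 = 0} := by
  ext p
  constructor
  · rintro ⟨hp, hrad⟩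
    have hfst (i : Fin n) (hi : k ≤ (i : ℕ)) : p.1 i = 0 := by
      have := hrad _ (zero_single_mem_lagrangian τ hi)
      rw [symplecticPairing_zero_single] at this
      exact (mul_eq_zero.mp this).resolve_right hτ
    have hsnd (i : Fin n) (hi : k ≤ (i : ℕ)) : p.2 i = 0 := by
      simpa [symplecticPairing_single_zero] using hrad _ (single_one_zero_mem_lagrangian τ hi)
    refine ⟨hfst, funext fun i => ?_⟩
    rcases lt_or_ge (i : ℕ) k with hi | hi
    · simpa [lagrangianSnd_of_lt τ hi] using hp.2 i (Set.mem_univ i)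
    · exact hsnd i hi
  · rintro ⟨hfst, hsnd⟩
    refine ⟨⟨fun i _ => ?_, hsnd ▸ zero_mem _⟩, fun r hr => ?_⟩
    · change p.1 i ∈ lagrangianFst F E k i
      rcases lt_or_ge (i : ℕ) k with hi | hi
      · rw [lagrangianFst_of_lt hi]; exact Submodule.mem_top
      · rw [hfst i hi]; exact zero_mem _
    · refine Finset.sum_eq_zero fun i _ => ?_
      rw [hsnd, Pi.zero_apply, zero_mul, sub_zero]
      rcases lt_or_ge (i : ℕ) k with hi | hi
      · have hr₂ : r.2 i ∈ lagrangianSnd F τ k i := hr.2 i (Set.mem_univ i)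
        rw [lagrangianSnd_of_lt τ hi, Submodule.mem_bot] at hr₂
        rw [hr₂, mul_zero]
      · rw [hfst i hi, zero_mul]

end Lagrangian

theorem stmt10_general
    (F E : Type*) [Field F] [Field E] [Algebra F E]
    (hquad : Module.finrank F E = 2)
    (τ : E) (hτ : τ ≠ 0) (htr : Algebra.trace F E τ = 0)
    (n k : ℕ)
    (ω : ((Fin n → E) × (Fin n → E)) → ((Fin n → E) × (Fin n → E)) → E)
    (hω : ∀ p r, ω p r = ∑ i : Fin n, (p.1 i * r.2 i - p.2 i * r.1 i))
    (Lk : Set ((Fin n → E) × (Fin n → E)))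
    (hLk : Lk = {p | (∀ i : Fin n, (i : ℕ) < k → p.2 i = 0) ∧
      ∀ i : Fin n, k ≤ (i : ℕ) →
        ((∃ a : F, p.1 i = algebraMap F E a) ∧ (∃ b : F, p.2 i = τ * algebraMap F E b))}) :
    -- L_k is an F-subspace
    ((0 : (Fin n → E) × (Fin n → E)) ∈ Lk ∧
      (∀ p ∈ Lk, ∀ r ∈ Lk, p + r ∈ Lk) ∧ (∀ (a : F), ∀ p ∈ Lk, a • p ∈ Lk)) ∧
    -- L_k is totally isotropic for the doubled form tr ∘ ω
    (∀ p ∈ Lk, ∀ r ∈ Lk, Algebra.trace F E (ω p r) = 0) ∧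
    -- L_k has half the F-dimension of 𝐖, i.e. it is a Lagrangian
    (2 * Module.finrank F (Submodule.span F Lk) =
      Module.finrank F ((Fin n → E) × (Fin n → E))) ∧
    -- the radical of ω restricted to L_k is X_k
    ({p ∈ Lk | ∀ r ∈ Lk, ω p r = 0} =
      {p | (∀ i : Fin n, k ≤ (i : ℕ) → p.1 i = 0) ∧ p.2 = 0}) := by
  obtain rfl : ω = symplecticPairing := funext₂ hω
  obtain rfl : Lk = lagrangian F τ n k := hLk.trans (coe_lagrangian τ n k).symm
  refine ⟨⟨zero_mem _, fun p hp r hr => add_mem hp hr, fun a p hp => Submodule.smul_mem _ a hp⟩,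
    fun p hp r hr => trace_symplecticPairing_of_mem_lagrangian htr hp hr, ?_, radical_lagrangian hτ⟩
  rw [Submodule.span_eq]
  exact two_mul_finrank_lagrangian hquad hτ

/-- In the doubled symplectic space `𝐖 = Res_{E/F}(W)`,
`W = E^n × E^n` with form `⟨(x,x'),(y,y')⟩ = ∑ xᵢ y'ᵢ − x'ᵢ yᵢ` and doubled form
`tr_{E/F}∘⟨-,-⟩`, the subspace `L_k = X_k ⊕ X'_{F,n−k} ⊕ τ Y'_{F,n−k}` is an
`F`-Lagrangian of `𝐖` whose radical `{x ∈ L_k : ⟨x, L_k⟩ = 0}` equals `X_k`. -/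
theorem stmt10
    (F E : Type*) [Field F] [Field E] [Algebra F E] [CharZero F]
    (hquad : Module.finrank F E = 2)
    (τ : E) (hτ : τ ≠ 0) (htr : Algebra.trace F E τ = 0)
    (n k : ℕ) (hk : k ≤ n)
    (ω : ((Fin n → E) × (Fin n → E)) → ((Fin n → E) × (Fin n → E)) → E)
    (hω : ∀ p r, ω p r = ∑ i : Fin n, (p.1 i * r.2 i - p.2 i * r.1 i))
    (Lk : Set ((Fin n → E) × (Fin n → E)))
    (hLk : Lk = {p | (∀ i : Fin n, (i : ℕ) < k → p.2 i = 0) ∧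
      ∀ i : Fin n, k ≤ (i : ℕ) →
        ((∃ a : F, p.1 i = algebraMap F E a) ∧ (∃ b : F, p.2 i = τ * algebraMap F E b))}) :
    -- L_k is an F-subspace
    ((0 : (Fin n → E) × (Fin n → E)) ∈ Lk ∧
      (∀ p ∈ Lk, ∀ r ∈ Lk, p + r ∈ Lk) ∧ (∀ (a : F), ∀ p ∈ Lk, a • p ∈ Lk)) ∧
    -- L_k is totally isotropic for the doubled form tr ∘ ω
    (∀ p ∈ Lk, ∀ r ∈ Lk, Algebra.trace F E (ω p r) = 0) ∧
    -- L_k has half the F-dimension of 𝐖, i.e. it is a Lagrangian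
    (2 * Module.finrank F (Submodule.span F Lk) =
      Module.finrank F ((Fin n → E) × (Fin n → E))) ∧
    -- the radical of ω restricted to L_k is X_k
    ({p ∈ Lk | ∀ r ∈ Lk, ω p r = 0} =
      {p | (∀ i : Fin n, k ≤ (i : ℕ) → p.1 i = 0) ∧ p.2 = 0}) :=
  stmt10_general F E hquad τ hτ htr n k ω hω Lk hLk
end

section
/- Let κ'(h) = max over all 2n×2n minors M of the matrix h of |det M|_F. For a = diag(a₁,…,aₙ) with each |a_i|_F ≤ 1, consider the 2n×4n matrix h(a) whose nonzero blocks are (a+a^{−1})/2 and (−a+a^{−1})/2 arranged as in the symplectic base change doubling computation. Then κ'(h(a)) ≥ C·∏_{i=1}^n |a_i|_F^{−2} for a constant C > 0 independent of a; consequently κ'(h(a))^{−Re(s)} ≤ C' ∏_{i=1}^n |a_i|_E^{Re(s)} for Re(s) ≥ 0. -/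
/-!
Since `(x + x⁻¹) / 2 + (-x + x⁻¹) / 2 = x⁻¹`, the ultrametric inequality forces one of the two
nonzero entries in each row of `h(a)` to have norm at least `‖aᵢ‖⁻¹`. Selecting that column in
each of the `2n` rows gives a diagonal `2n × 2n` submatrix whose determinant has norm at least
`∏ ‖aᵢ‖⁻²`, so `C = 1` works; the second bound follows by raising to the power `-s`.
-/

open Matrix

theorem IsNonarchimedean.norm_inv_le_max_norm_half {F : Type*} [NormedField F] [NeZero (2 : F)]
    (hna : IsNonarchimedean (norm : F → ℝ)) (x : F) :
    ‖x‖⁻¹ ≤ max ‖(x + x⁻¹) / 2‖ ‖(-x + x⁻¹) / 2‖ := by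
  have hsum : (x + x⁻¹) / 2 + (-x + x⁻¹) / 2 = x⁻¹ := by
    field_simp
    ring
  calc ‖x‖⁻¹ = ‖(x + x⁻¹) / 2 + (-x + x⁻¹) / 2‖ := by rw [hsum, norm_inv]
    _ ≤ _ := hna _ _

def Function.Embedding.selectSummand {ι : Type*} (p : ι → Bool) : ι ↪ ι ⊕ ι where
  toFun i := bif p i then .inl i else .inr i
  inj' := Function.LeftInverse.injective (g := Sum.elim id id) fun i => by cases p i <;> rfl

theorem Matrix.fromCols_diagonal_submatrix_selectSummand {ι R : Type*} [DecidableEq ι] [Zero R]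
    (u v : ι → R) (p : ι → Bool) :
    (fromCols (diagonal u) (diagonal v)).submatrix id (Function.Embedding.selectSummand p) =
      diagonal fun i => bif p i then u i else v i := by
  ext i j
  by_cases hij : i = j <;> cases hp : p j <;> simp [Function.Embedding.selectSummand, hp, hij]

theorem Matrix.fromBlocks_submatrix_sumMap {l m n o l' m' n' o' R : Type*}
    (A : Matrix n l R) (B : Matrix n m R) (C : Matrix o l R) (D : Matrix o m R)
    (f₁ : n' → n) (f₂ : o' → o) (g₁ : l' → l) (g₂ : m' → m) :
    (fromBlocks A B C D).submatrix (Sum.map f₁ f₂) (Sum.map g₁ g₂) =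
      fromBlocks (A.submatrix f₁ g₁) (B.submatrix f₁ g₂) (C.submatrix f₂ g₁)
        (D.submatrix f₂ g₂) := by
  ext (i | i) (j | j) <;> rfl

section Doubling

variable {ι F : Type*} [Fintype ι] [DecidableEq ι]

def doublingMatrix [Zero F] (u v : ι → F) : Matrix (ι ⊕ ι) ((ι ⊕ ι) ⊕ (ι ⊕ ι)) F :=
  fromBlocks (fromCols (diagonal u) (diagonal v)) 0 0 (fromCols (diagonal v) (diagonal u))

theorem det_doublingMatrix_submatrix [CommRing F] (u v : ι → F) (p q : ι → Bool) :
    ((doublingMatrix u v).submatrix id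
        ((Function.Embedding.selectSummand p).sumMap (Function.Embedding.selectSummand q))).det =
      (∏ i, bif p i then u i else v i) * ∏ i, bif q i then v i else u i := by
  rw [Function.Embedding.coe_sumMap, ← Sum.map_id_id, doublingMatrix,
    fromBlocks_submatrix_sumMap, fromCols_diagonal_submatrix_selectSummand,
    fromCols_diagonal_submatrix_selectSummand]
  simp only [submatrix_zero, Pi.zero_apply, det_fromBlocks_zero₂₁, det_diagonal]

theorem exists_prod_sq_le_norm_det_doublingMatrix_submatrix
    [NormedCommRing F] [NormMulClass F] [NormOneClass F]
    (u v : ι → F) (t : ι → ℝ) (ht : ∀ i, 0 ≤ t i) (huv : ∀ i, t i ≤ max ‖u i‖ ‖v i‖) :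
    ∃ e : ι ⊕ ι ↪ (ι ⊕ ι) ⊕ (ι ⊕ ι),
      ∏ i, t i ^ 2 ≤ ‖((doublingMatrix u v).submatrix id e).det‖ := by
  have hchoice {x y : F} {r : ℝ} (hxy : r ≤ max ‖x‖ ‖y‖) :
      ∃ b : Bool, r ≤ ‖bif b then x else y‖ := by
    rcases le_max_iff.mp hxy with h | h
    exacts [⟨true, h⟩, ⟨false, h⟩]
  choose p hp using fun i => hchoice (huv i)
  choose q hq using fun i => hchoice (max_comm ‖u i‖ ‖v i‖ ▸ huv i)
  refine ⟨(Function.Embedding.selectSummand p).sumMap (Function.Embedding.selectSummand q), ?_⟩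
  rw [det_doublingMatrix_submatrix u v p q, norm_mul, norm_prod, norm_prod,
    ← Finset.prod_mul_distrib]
  refine Finset.prod_le_prod (fun i _ => sq_nonneg _) fun i _ => ?_
  rw [sq]
  exact mul_le_mul (hp i) (hq i) (ht i) (norm_nonneg _)

end Doubling

theorem Real.rpow_neg_le_prod_rpow_of_prod_inv_le {ι : Type*} [Fintype ι] {x : ι → ℝ}
    (hx : ∀ i, 0 < x i) {κ s : ℝ} (hκ : ∏ i, (x i)⁻¹ ≤ κ) (hs : 0 ≤ s) :
    κ ^ (-s) ≤ ∏ i, x i ^ s := by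
  have hprod : 0 < ∏ i, x i := Finset.prod_pos fun i _ => hx i
  calc κ ^ (-s) ≤ (∏ i, (x i)⁻¹) ^ (-s) :=
        rpow_le_rpow_of_nonpos (by simpa using hprod) hκ (neg_nonpos.mpr hs)
    _ = ∏ i, x i ^ s := by
        rw [Finset.prod_inv_distrib, inv_rpow hprod.le, rpow_neg hprod.le, inv_inv,
          finsetProd_rpow _ _ fun i _ => (hx i).le]

/-- Lower bound on the maximal `2n×2n` minor of the matrix `h(a)` arising
in the symplectic base change doubling computation: with
`κ'(h) = max_{2n×2n minors M} ‖det M‖`, one has `κ'(h(a)) ≥ C ∏ᵢ ‖aᵢ‖^{-2}` for a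
constant `C > 0`, whenever `‖aᵢ‖ ≤ 1`; consequently `κ'(h(a))^{-s} ≤ C^{-s} ∏ᵢ |aᵢ|_E^{s}`
for `s ≥ 0`, where `|x|_E = ‖x‖²`. -/
theorem stmt18
    (F : Type*) [NontriviallyNormedField F] [CharZero F]
    (hna : IsNonarchimedean (norm : F → ℝ))
    (n : ℕ) :
    ∃ C : ℝ, 0 < C ∧
      ∀ a : Fin n → F, (∀ i, a i ≠ 0) → (∀ i, ‖a i‖ ≤ 1) →
      ∀ h : Matrix (Fin n ⊕ Fin n) ((Fin n ⊕ Fin n) ⊕ (Fin n ⊕ Fin n)) F,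
        h = Matrix.of (fun r c =>
          match r, c with
          | Sum.inl i, Sum.inl (Sum.inl j) => if i = j then (a i + (a i)⁻¹) / 2 else 0
          | Sum.inl i, Sum.inl (Sum.inr j) => if i = j then (-(a i) + (a i)⁻¹) / 2 else 0
          | Sum.inr i, Sum.inr (Sum.inl j) => if i = j then (-(a i) + (a i)⁻¹) / 2 else 0
          | Sum.inr i, Sum.inr (Sum.inr j) => if i = j then (a i + (a i)⁻¹) / 2 else 0
          | _, _ => 0) →
      ∀ κ' : ℝ,
        κ' = ⨆ e : (Fin n ⊕ Fin n) ↪ ((Fin n ⊕ Fin n) ⊕ (Fin n ⊕ Fin n)),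
          ‖(h.submatrix id e).det‖ →
        (C * ∏ i : Fin n, (‖a i‖ ^ 2)⁻¹ ≤ κ') ∧
          (∀ s : ℝ, 0 ≤ s →
            κ' ^ (-s) ≤ C ^ (-s) * ∏ i : Fin n, (‖a i‖ ^ 2) ^ s) := by
  refine ⟨1, one_pos, fun a ha _ h hh κ' hκ => ?_⟩
  have h_eq :
      h = doublingMatrix (fun i => (a i + (a i)⁻¹) / 2) (fun i => (-a i + (a i)⁻¹) / 2) := by
    subst hh
    ext (i | i) ((j | j) | (j | j)) <;> rfl
  obtain ⟨e, he⟩ := exists_prod_sq_le_norm_det_doublingMatrix_submatrix _ _ (fun i => ‖a i‖⁻¹)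
    (fun i => by positivity) fun i => hna.norm_inv_le_max_norm_half (a i)
  have hκ_ge : ∏ i, (‖a i‖ ^ 2)⁻¹ ≤ κ' := by
    simp only [← inv_pow, hκ, h_eq]
    exact le_ciSup_of_le (Finite.bddAbove_range _) e he
  refine ⟨by rwa [one_mul], fun s hs => ?_⟩
  rw [Real.one_rpow, one_mul]
  exact Real.rpow_neg_le_prod_rpow_of_prod_inv_le (fun i => by have := ha i; positivity) hκ_ge hs
end
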